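/- All four input-weight gradients of one LSTM step are outer products with the input: for one LSTM step followed by a dense output layer and a differentiable loss E, ∂E/∂W_o = Δ^o · xᵀ, ∂E/∂W_i = Δ^i · xᵀ, ∂E/∂W_g = Δ^g · xᵀ, and ∂E/∂W_f = Δ^f · xᵀ, where Δ^o = ∂E/∂h_t ⊙ tanh(c_t) ⊙ o_t ⊙ (1 − o_t), Δ^i = ∂E/∂h_t ⊙ o_t ⊙ (1 − tanh²(c_t)) ⊙ g_t ⊙ i_t ⊙ (1 − i_t), Δ^g = ∂E/∂h_t ⊙ o_t ⊙ (1 − tanh²(c_t)) ⊙ i_t ⊙ (1 − g_t²), and Δ^f = ∂E/∂h_t ⊙ o_t ⊙ (1 − tanh²(c_t)) ⊙ c_{t-1} ⊙ f_t ⊙ (1 − f_t), with ∂E/∂h_t = W_outᵀ [∇E(ŷ) ⊙ φ_out'(W_out h_t)]. -/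

import Mathlib

noncomputable section

/-- Matrix-vector product: `(W v)_i = ∑ j, W i j * v j`. -/
def matVec {e d : ℕ} (W : Fin e → Fin d → ℝ) (v : Fin d → ℝ) : Fin e → ℝ :=
  fun i => ∑ j, W i j * v j

/-- Transposed matrix-vector product: `(Wᵀ v)_j = ∑ i, W i j * v i`. -/
def matVecT {e d : ℕ} (W : Fin e → Fin d → ℝ) (v : Fin e → ℝ) : Fin d → ℝ :=
  fun j => ∑ i, W i j * v i

/-- Componentwise application of a scalar function. -/
def cw {n : ℕ} (φ : ℝ → ℝ) (v : Fin n → ℝ) : Fin n → ℝ := fun i => φ (v i)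

/-- Outer product `u vᵀ`. -/
def outer {e d : ℕ} (u : Fin e → ℝ) (v : Fin d → ℝ) : Fin e → Fin d → ℝ :=
  fun i j => u i * v j

/-- Gradient of a scalar function of a vector: the vector of partial derivatives. -/
def grad {n : ℕ} (f : (Fin n → ℝ) → ℝ) (v : Fin n → ℝ) : Fin n → ℝ :=
  fun i => fderiv ℝ f v (Pi.single i 1)

/-- Matrix of partial derivatives of a scalar function of a matrix. -/
def gradM {e d : ℕ} (f : (Fin e → Fin d → ℝ) → ℝ) (W : Fin e → Fin d → ℝ) :
    Fin e → Fin d → ℝ :=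
  fun i j => fderiv ℝ f W (Pi.single i (Pi.single j 1))

/-- The logistic sigmoid `σ(z) = 1 / (1 + e^{-z})`. -/
def sigm (z : ℝ) : ℝ := 1 / (1 + Real.exp (-z))

/-!
Each input weight matrix `W` enters the computation only through the pre-activation
`z = W x + b`, which is linear in `W` with derivative `x_j eᵢ` in the direction of the matrix
unit `E_{ij}`; hence `∂E/∂W = (∂E/∂z) xᵀ`. The gate acts on `z` componentwise, so
`∂E/∂z = ∂E/∂h_t ⊙ ∂h_t/∂z`, and each of the four factors `∂h_t/∂z` is a one-variable chain-rule
computation with `σ' = σ (1 - σ)` and `tanh' = 1 - tanh²`.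
-/

open ContinuousLinearMap

lemma sigm_eq_sigmoid : sigm = Real.sigmoid := funext fun _ => one_div _

lemma hasDerivAt_sigm (z : ℝ) : HasDerivAt sigm (sigm z * (1 - sigm z)) z := by
  rw [sigm_eq_sigmoid]; exact Real.hasDerivAt_sigmoid z

lemma Real.hasDerivAt_tanh (z : ℝ) : HasDerivAt Real.tanh (1 - Real.tanh z ^ 2) z := by
  have h := (Real.hasDerivAt_sinh z).div (Real.hasDerivAt_cosh z) (Real.cosh_pos z).ne'
  rw [show Real.sinh / Real.cosh = Real.tanh from (funext Real.tanh_eq_sinh_div_cosh).symm] at h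
  refine h.congr_deriv ?_
  rw [Real.tanh_eq_sinh_div_cosh]
  field_simp

lemma HasDerivAt.tanh {f : ℝ → ℝ} {f' x : ℝ} (hf : HasDerivAt f f' x) :
    HasDerivAt (fun y => Real.tanh (f y)) ((1 - Real.tanh (f x) ^ 2) * f') x :=
  (Real.hasDerivAt_tanh (f x)).comp x hf

def matVecCLM {e d : ℕ} (A : Fin e → Fin d → ℝ) : (Fin d → ℝ) →L[ℝ] Fin e → ℝ :=
  (Matrix.mulVecLin (A : Matrix (Fin e) (Fin d) ℝ)).toContinuousLinearMap

@[simp] lemma matVecCLM_apply {e d : ℕ} (A : Fin e → Fin d → ℝ) (v : Fin d → ℝ) :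
    matVecCLM A v = matVec A v := rfl

def matVecFlipCLM {e d : ℕ} (x : Fin d → ℝ) : (Fin e → Fin d → ℝ) →L[ℝ] Fin e → ℝ :=
  ((Matrix.mulVecBilin ℝ ℝ).flip x).toContinuousLinearMap

@[simp] lemma matVecFlipCLM_apply {e d : ℕ} (x : Fin d → ℝ) (W : Fin e → Fin d → ℝ) :
    matVecFlipCLM x W = matVec W x := rfl

lemma matVec_single_one {e d : ℕ} (A : Fin e → Fin d → ℝ) (j : Fin d) :
    matVec A (Pi.single j 1) = fun k => A k j := by
  ext k; simp [matVec, Pi.single_apply]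

lemma matVec_single_single_one {e d : ℕ} (x : Fin d → ℝ) (i : Fin e) (j : Fin d) :
    matVec (Pi.single i (Pi.single j 1)) x = Pi.single i (x j) := by
  ext k
  rcases eq_or_ne k i with rfl | hk
  · simp [matVec, Pi.single_apply]
  · simp [matVec, hk]

lemma hasFDerivAt_pi_map {n : ℕ} {g : Fin n → ℝ → ℝ} {gd a : Fin n → ℝ}
    (hg : ∀ k, HasDerivAt (g k) (gd k) (a k)) :
    HasFDerivAt (fun z k => g k (z k))
      (ContinuousLinearMap.pi fun k => gd k • (proj k : (Fin n → ℝ) →L[ℝ] ℝ)) a :=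
  hasFDerivAt_pi.2 fun k => (hg k).comp_hasFDerivAt a (hasFDerivAt_apply k a)

lemma DifferentiableAt.comp_pi_map {n : ℕ} {F : (Fin n → ℝ) → ℝ} {g : Fin n → ℝ → ℝ}
    {gd a : Fin n → ℝ} (hF : DifferentiableAt ℝ F (fun k => g k (a k)))
    (hg : ∀ k, HasDerivAt (g k) (gd k) (a k)) :
    DifferentiableAt ℝ (fun z => F (fun k => g k (z k))) a :=
  (hF.hasFDerivAt.comp a (hasFDerivAt_pi_map hg)).differentiableAt

lemma fderiv_apply_eq_sum_grad {n : ℕ} (F : (Fin n → ℝ) → ℝ) (y v : Fin n → ℝ) :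
    fderiv ℝ F y v = ∑ k, v k * grad F y k := by
  conv_lhs => rw [← Finset.univ_sum_single v]
  rw [map_sum]
  refine Finset.sum_congr rfl fun k _ => ?_
  rw [grad, ← smul_eq_mul, ← map_smul, ← Pi.single_smul', smul_eq_mul, mul_one]

lemma fderiv_comp_apply_eq_sum_grad {X : Type*} [NormedAddCommGroup X] [NormedSpace ℝ X]
    {n : ℕ} {F : (Fin n → ℝ) → ℝ} {G : X → Fin n → ℝ} {G' : X →L[ℝ] Fin n → ℝ} {a : X}
    (hF : DifferentiableAt ℝ F (G a)) (hG : HasFDerivAt G G' a) (v : X) :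
    fderiv ℝ (fun y => F (G y)) a v = ∑ k, G' v k * grad F (G a) k := by
  have hFG : HasFDerivAt (fun y => F (G y)) ((fderiv ℝ F (G a)).comp G') a :=
    hF.hasFDerivAt.comp a hG
  rw [hFG.fderiv, comp_apply, fderiv_apply_eq_sum_grad]

lemma grad_comp_pi_map {n : ℕ} {F : (Fin n → ℝ) → ℝ} {g : Fin n → ℝ → ℝ} {gd a : Fin n → ℝ}
    (hF : DifferentiableAt ℝ F (fun k => g k (a k))) (hg : ∀ k, HasDerivAt (g k) (gd k) (a k)) :
    grad (fun z => F (fun k => g k (z k))) a = grad F (fun k => g k (a k)) * gd := by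
  ext i
  rw [grad, fderiv_comp_apply_eq_sum_grad hF (hasFDerivAt_pi_map hg)]
  simp [Pi.single_apply, mul_comm]

lemma grad_comp_matVec {e d : ℕ} {F : (Fin e → ℝ) → ℝ} (A : Fin e → Fin d → ℝ) {v : Fin d → ℝ}
    (hF : DifferentiableAt ℝ F (matVec A v)) :
    grad (fun h => F (matVec A h)) v = matVecT A (grad F (matVec A v)) := by
  ext i
  rw [grad, fderiv_comp_apply_eq_sum_grad hF (matVecCLM A).hasFDerivAt]
  simp [matVecT, matVec_single_one]

lemma gradM_comp_matVec_add {e d : ℕ} {F : (Fin e → ℝ) → ℝ} (x : Fin d → ℝ) (b : Fin e → ℝ)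
    {W : Fin e → Fin d → ℝ} (hF : DifferentiableAt ℝ F (matVec W x + b)) :
    gradM (fun W' => F (matVec W' x + b)) W = outer (grad F (matVec W x + b)) x := by
  ext i j
  rw [gradM, fderiv_comp_apply_eq_sum_grad (G := fun W' => matVec W' x + b) hF
    ((matVecFlipCLM x).hasFDerivAt.add_const b)]
  simp [outer, matVec_single_single_one, Pi.single_apply, mul_comm]

lemma gradM_comp_pi_map_matVec_add {e d : ℕ} {L : (Fin e → ℝ) → ℝ} {g : Fin e → ℝ → ℝ}
    {gd h b : Fin e → ℝ} {W : Fin e → Fin d → ℝ} {x : Fin d → ℝ}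
    (hg : ∀ k, HasDerivAt (g k) (gd k) ((matVec W x + b) k))
    (hh : (fun k => g k ((matVec W x + b) k)) = h) (hL : DifferentiableAt ℝ L h) :
    gradM (fun W' => L (fun k => g k ((matVec W' x + b) k))) W = outer (grad L h * gd) x := by
  subst hh
  rw [← grad_comp_pi_map hL hg]
  exact gradM_comp_matVec_add (F := fun z => L fun k => g k (z k)) x b (hL.comp_pi_map hg)

lemma grad_comp_cw_matVec {m e : ℕ} {E : (Fin m → ℝ) → ℝ} {φ : ℝ → ℝ} (A : Fin m → Fin e → ℝ)
    {h : Fin e → ℝ} (hE : DifferentiableAt ℝ E (cw φ (matVec A h)))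
    (hφ : ∀ k, DifferentiableAt ℝ φ (matVec A h k)) :
    grad (fun h' => E (cw φ (matVec A h'))) h
      = matVecT A (grad E (cw φ (matVec A h)) * cw (deriv φ) (matVec A h)) := by
  have hφ' : ∀ k, HasDerivAt φ (cw (deriv φ) (matVec A h) k) (matVec A h k) :=
    fun k => (hφ k).hasDerivAt
  exact (grad_comp_matVec (F := fun z => E (cw φ z)) A (hE.comp_pi_map (g := fun _ => φ) hφ')).trans
    (congrArg (matVecT A) (grad_comp_pi_map (g := fun _ => φ) hE hφ'))

/- A single hidden unit `o * tanh c` as a function of one gate's pre-activation `z`; the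
parameters `o f cp i g c` stand for the unit's `o_t, f_t, c_{t-1}, i_t, g_t, c_t`. -/
lemma hasDerivAt_hiddenUnit_outputGate {z c o : ℝ} (ho : sigm z = o) :
    HasDerivAt (fun s => sigm s * Real.tanh c) (Real.tanh c * o * (1 - o)) z := by
  subst ho
  exact ((hasDerivAt_sigm z).mul_const _).congr_deriv (by ring)

lemma hasDerivAt_hiddenUnit_inputGate {z o f cp i g c : ℝ} (hi : sigm z = i)
    (hc : f * cp + i * g = c) :
    HasDerivAt (fun s => o * Real.tanh (f * cp + sigm s * g))
      (o * (1 - Real.tanh c ^ 2) * g * i * (1 - i)) z := by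
  subst hi hc
  exact ((((hasDerivAt_sigm z).mul_const g).const_add (f * cp)).tanh.const_mul o).congr_deriv
    (by ring)

lemma hasDerivAt_hiddenUnit_candidate {z o f cp i g c : ℝ} (hg : Real.tanh z = g)
    (hc : f * cp + i * g = c) :
    HasDerivAt (fun s => o * Real.tanh (f * cp + i * Real.tanh s))
      (o * (1 - Real.tanh c ^ 2) * i * (1 - g ^ 2)) z := by
  subst hg hc
  exact ((((Real.hasDerivAt_tanh z).const_mul i).const_add (f * cp)).tanh.const_mul o).congr_deriv
    (by ring)

lemma hasDerivAt_hiddenUnit_forgetGate {z o f cp i g c : ℝ} (hf : sigm z = f)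
    (hc : f * cp + i * g = c) :
    HasDerivAt (fun s => o * Real.tanh (sigm s * cp + i * g))
      (o * (1 - Real.tanh c ^ 2) * cp * f * (1 - f)) z := by
  subst hf hc
  exact ((((hasDerivAt_sigm z).mul_const cp).add_const (i * g)).tanh.const_mul o).congr_deriv
    (by ring)

/-- All four input-weight gradients of one LSTM step are outer products
with the input: `∂E/∂W_o = Δᵒ xᵀ`, `∂E/∂W_i = Δⁱ xᵀ`, `∂E/∂W_g = Δᵍ xᵀ`, `∂E/∂W_f = Δᶠ xᵀ`,
where `Δᵒ = ∂E/∂h_t ⊙ tanh(c_t) ⊙ o_t ⊙ (1 − o_t)`,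
`Δⁱ = ∂E/∂h_t ⊙ o_t ⊙ (1 − tanh²(c_t)) ⊙ g_t ⊙ i_t ⊙ (1 − i_t)`,
`Δᵍ = ∂E/∂h_t ⊙ o_t ⊙ (1 − tanh²(c_t)) ⊙ i_t ⊙ (1 − g_t²)`,
`Δᶠ = ∂E/∂h_t ⊙ o_t ⊙ (1 − tanh²(c_t)) ⊙ c_{t-1} ⊙ f_t ⊙ (1 − f_t)`, and
`∂E/∂h_t = W_outᵀ [∇E(ŷ) ⊙ φ_out'(W_out h_t)]`; each `∂E/∂W` is the matrix of partial
derivatives of the map obtained by treating that weight matrix as a free variable of the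
downstream computation, all other quantities held at their actual values. -/
theorem stmt_5
    {d e m : ℕ}
    (x : Fin d → ℝ) (hprev cprev : Fin e → ℝ)
    (Wo Wi Wf Wg : Fin e → Fin d → ℝ) (Uo Ui Uf Ug : Fin e → Fin e → ℝ)
    (Wout : Fin m → Fin e → ℝ)
    (φout : ℝ → ℝ) (hφout : Differentiable ℝ φout)
    (E : (Fin m → ℝ) → ℝ) (hE : Differentiable ℝ E)
    (ot it ft gt ct ht : Fin e → ℝ) (yhat : Fin m → ℝ)
    (hot : ot = cw sigm (matVec Wo x + matVec Uo hprev))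
    (hit : it = cw sigm (matVec Wi x + matVec Ui hprev))
    (hft : ft = cw sigm (matVec Wf x + matVec Uf hprev))
    (hgt : gt = cw Real.tanh (matVec Wg x + matVec Ug hprev))
    (hct : ct = ft * cprev + it * gt)
    (hht : ht = ot * cw Real.tanh ct)
    (hyhat : yhat = cw φout (matVec Wout ht))
    (dEdh : Fin e → ℝ)
    (hdEdh : dEdh = matVecT Wout (grad E yhat * cw (deriv φout) (matVec Wout ht)))
    :
    gradM (fun W =>
        E (cw φout (matVec Wout (cw sigm (matVec W x + matVec Uo hprev) * cw Real.tanh ct)))) Wo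
      = outer (dEdh * cw Real.tanh ct * ot * (1 - ot)) x
    ∧ gradM (fun W =>
        E (cw φout (matVec Wout
          (ot * cw Real.tanh (ft * cprev + cw sigm (matVec W x + matVec Ui hprev) * gt))))) Wi
      = outer (dEdh * ot * (1 - cw Real.tanh ct ^ 2) * gt * it * (1 - it)) x
    ∧ gradM (fun W =>
        E (cw φout (matVec Wout
          (ot * cw Real.tanh (ft * cprev + it * cw Real.tanh (matVec W x + matVec Ug hprev)))))) Wg
      = outer (dEdh * ot * (1 - cw Real.tanh ct ^ 2) * it * (1 - gt ^ 2)) x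
    ∧ gradM (fun W =>
        E (cw φout (matVec Wout
          (ot * cw Real.tanh (cw sigm (matVec W x + matVec Uf hprev) * cprev + it * gt))))) Wf
      = outer (dEdh * ot * (1 - cw Real.tanh ct ^ 2) * cprev * ft * (1 - ft)) x := by
  set L : (Fin e → ℝ) → ℝ := fun h => E (cw φout (matVec Wout h))
  have hL : DifferentiableAt ℝ L ht :=
    ((hE _).comp_pi_map (a := matVec Wout ht) fun _ => (hφout _).hasDerivAt).comp ht
      (matVecCLM Wout).differentiableAt
  have hgradL : grad L ht = dEdh := by
    rw [hdEdh, hyhat]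
    exact grad_comp_cw_matVec Wout (hE _) fun _ => hφout _
  refine ⟨?_, ?_, ?_, ?_⟩
  · refine (gradM_comp_pi_map_matVec_add (L := L) (g := fun k s => sigm s * Real.tanh (ct k))
      (gd := cw Real.tanh ct * ot * (1 - ot))
      (fun k => hasDerivAt_hiddenUnit_outputGate (congrFun hot k).symm)
      (by rw [hht, hot]; rfl) hL).trans ?_
    rw [hgradL]; congr 1; ring
  · refine (gradM_comp_pi_map_matVec_add (L := L)
      (g := fun k s => ot k * Real.tanh (ft k * cprev k + sigm s * gt k))
      (gd := ot * (1 - cw Real.tanh ct ^ 2) * gt * it * (1 - it))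
      (fun k => hasDerivAt_hiddenUnit_inputGate (congrFun hit k).symm (congrFun hct k).symm)
      (by rw [hht, hct, hit]; rfl) hL).trans ?_
    rw [hgradL]; congr 1; ring
  · refine (gradM_comp_pi_map_matVec_add (L := L)
      (g := fun k s => ot k * Real.tanh (ft k * cprev k + it k * Real.tanh s))
      (gd := ot * (1 - cw Real.tanh ct ^ 2) * it * (1 - gt ^ 2))
      (fun k => hasDerivAt_hiddenUnit_candidate (congrFun hgt k).symm (congrFun hct k).symm)
      (by rw [hht, hct, hgt]; rfl) hL).trans ?_
    rw [hgradL]; congr 1; ring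
  · refine (gradM_comp_pi_map_matVec_add (L := L)
      (g := fun k s => ot k * Real.tanh (sigm s * cprev k + it k * gt k))
      (gd := ot * (1 - cw Real.tanh ct ^ 2) * cprev * ft * (1 - ft))
      (fun k => hasDerivAt_hiddenUnit_forgetGate (congrFun hft k).symm (congrFun hct k).symm)
      (by rw [hht, hct, hft]; rfl) hL).trans ?_
    rw [hgradL]; congr 1; ring
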